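/- Let R be an n×n Hermitian matrix with diagonal elements d ∈ ℝⁿ and eigenvalues λ ∈ ℝⁿ. Then d is majorized by λ, i.e., for every k, the sum of the k largest entries of d is at most the sum of the k largest entries of λ, with equality for k = n. -/

import Mathlib

/-!
Writing `A = U diag(λ) U*`, the diagonal of `A` is `M λ` with `M i j = ‖U i j‖²`, and `M` is doubly
stochastic because `U` is unitary. For a set `s` of indices the weights `c j = ∑ i ∈ s, M i j` lie
in `[0, 1]` and add up to `#s`, and any such weighted sum of the `λ j` is at most the sum of the
`#s` largest of them.
-/

open Finset

section TopSubset

variable {ι R : Type*} [Fintype ι] [LinearOrder R]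

lemma exists_threshold_of_le_of_mem_of_notMem [Nonempty R] (μ : ι → R) {t : Finset ι}
    (ht : ∀ i ∈ t, ∀ j ∉ t, μ j ≤ μ i) :
    ∃ m, (∀ i ∈ t, m ≤ μ i) ∧ ∀ j ∉ t, μ j ≤ m := by
  rcases t.eq_empty_or_nonempty with rfl | hne
  · obtain ⟨m, hm⟩ := Finite.exists_le μ
    exact ⟨m, by simp, fun j _ => hm j⟩
  · exact ⟨t.inf' hne μ, fun i hi => inf'_le μ hi,
      fun j hj => le_inf' hne μ fun i hi => ht i hi j hj⟩

variable [CommRing R] [IsStrictOrderedRing R]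

/-- A `k`-subset maximizing `∑ i ∈ t, μ i` dominates its complement: otherwise swapping a smaller
member for a larger non-member would increase the sum. -/
lemma exists_card_eq_and_le_of_mem_of_notMem [DecidableEq ι] (μ : ι → R) {k : ℕ}
    (hk : k ≤ Fintype.card ι) :
    ∃ t : Finset ι, #t = k ∧ ∀ i ∈ t, ∀ j ∉ t, μ j ≤ μ i := by
  have hne : (powersetCard k (univ : Finset ι)).Nonempty := powersetCard_nonempty.mpr hk
  obtain ⟨t, ht, hmax⟩ := exists_max_image _ (fun t => ∑ i ∈ t, μ i) hne
  rw [mem_powersetCard_univ] at ht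
  refine ⟨t, ht, fun i hi j hj => le_of_not_gt fun hlt => ?_⟩
  have hj' : j ∉ t.erase i := fun h => hj (mem_of_mem_erase h)
  have hcard : #(insert j (t.erase i)) = k := by
    rw [card_insert_of_notMem hj', card_erase_of_mem hi, ht]
    have : 0 < k := ht ▸ card_pos.mpr ⟨i, hi⟩
    omega
  have := hmax _ (mem_powersetCard_univ.mpr hcard)
  rw [sum_insert hj', sum_erase_eq_sub hi] at this
  linarith

lemma sum_mul_le_sum_of_threshold (μ c : ι → R) {t : Finset ι} {m : R}
    (hmem : ∀ i ∈ t, m ≤ μ i) (hnotMem : ∀ j ∉ t, μ j ≤ m)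
    (hc0 : ∀ j, 0 ≤ c j) (hc1 : ∀ j, c j ≤ 1) (hsum : ∑ j, c j = #t) :
    ∑ j, μ j * c j ≤ ∑ j ∈ t, μ j := by
  classical
  have hshift : ∑ j, (μ j - m) * c j ≤ ∑ j ∈ t, (μ j - m) :=
    calc ∑ j, (μ j - m) * c j ≤ ∑ j, if j ∈ t then μ j - m else 0 := sum_le_sum fun j _ => by
          split_ifs with hj
          · exact mul_le_of_le_one_right (sub_nonneg.2 (hmem j hj)) (hc1 j)
          · exact mul_nonpos_of_nonpos_of_nonneg (sub_nonpos.2 (hnotMem j hj)) (hc0 j)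
      _ = ∑ j ∈ t, (μ j - m) := by rw [sum_ite_mem, univ_inter]
  have : ∑ j, μ j * c j = ∑ j, (μ j - m) * c j + m * #t := by
    simp only [sub_mul, sum_sub_distrib, ← mul_sum, hsum]; ring
  rw [this]
  have : ∑ j ∈ t, (μ j - m) = ∑ j ∈ t, μ j - m * #t := by
    simp [sum_sub_distrib, mul_comm]
  linarith

lemma exists_card_eq_sum_mul_le_sum [DecidableEq ι] (μ c : ι → R) (hc0 : ∀ j, 0 ≤ c j)
    (hc1 : ∀ j, c j ≤ 1) {k : ℕ} (hk : ∑ j, c j = k) :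
    ∃ t : Finset ι, #t = k ∧ ∑ j, μ j * c j ≤ ∑ j ∈ t, μ j := by
  have hkcard : k ≤ Fintype.card ι := by
    have : (k : R) ≤ Fintype.card ι := by
      simpa [← hk] using sum_le_sum fun j (_ : j ∈ univ) => hc1 j
    exact_mod_cast this
  obtain ⟨t, htk, hsep⟩ := exists_card_eq_and_le_of_mem_of_notMem μ hkcard
  obtain ⟨m, hmem, hnotMem⟩ := exists_threshold_of_le_of_mem_of_notMem μ hsep
  exact ⟨t, htk, sum_mul_le_sum_of_threshold μ c hmem hnotMem hc0 hc1 (htk ▸ hk)⟩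

end TopSubset

namespace Matrix

variable {ι : Type*} [Fintype ι] [DecidableEq ι]

theorem exists_card_eq_sum_mulVec_le_sum_of_mem_doublyStochastic {R : Type*} [CommRing R]
    [LinearOrder R] [IsStrictOrderedRing R] {M : Matrix ι ι R} (hM : M ∈ doublyStochastic R ι)
    (y : ι → R) (s : Finset ι) :
    ∃ t : Finset ι, #t = #s ∧ ∑ i ∈ s, (M *ᵥ y) i ≤ ∑ i ∈ t, y i := by
  rw [mem_doublyStochastic_iff_sum] at hM
  obtain ⟨hnonneg, hrow, hcol⟩ := hM
  have hc1 : ∀ j, ∑ i ∈ s, M i j ≤ 1 := fun j =>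
    hcol j ▸ sum_le_sum_of_subset_of_nonneg (subset_univ s) fun i _ _ => hnonneg i j
  have hsum : ∑ j, ∑ i ∈ s, M i j = #s := by
    rw [sum_comm, sum_congr rfl fun i _ => hrow i]; simp
  have hswap : ∑ i ∈ s, (M *ᵥ y) i = ∑ j, y j * ∑ i ∈ s, M i j := by
    simp only [mulVec, dotProduct, mul_sum]
    rw [sum_comm]
    exact sum_congr rfl fun j _ => sum_congr rfl fun i _ => mul_comm _ _
  rw [hswap]
  exact exists_card_eq_sum_mul_le_sum y _ (fun j => sum_nonneg fun i _ => hnonneg i j) hc1 hsum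

variable {𝕜 : Type*} [RCLike 𝕜]

theorem normSq_mem_doublyStochastic {U : Matrix ι ι 𝕜} (hU : U ∈ unitaryGroup ι 𝕜) :
    of (fun i j => ‖U i j‖ ^ 2) ∈ doublyStochastic ℝ ι := by
  refine mem_doublyStochastic_iff_sum.mpr ⟨fun i j => sq_nonneg _, fun i => ?_, fun j => ?_⟩
  · have h := congrFun (congrFun (mem_unitaryGroup_iff.mp hU) i) i
    simp only [mul_apply, star_apply, RCLike.star_def, RCLike.mul_conj, one_apply_eq] at h
    simpa using (by exact_mod_cast h : ∑ j, ‖U i j‖ ^ 2 = (1 : ℝ))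
  · have h := congrFun (congrFun (mem_unitaryGroup_iff'.mp hU) j) j
    simp only [mul_apply, star_apply, RCLike.star_def, RCLike.conj_mul, one_apply_eq] at h
    simpa using (by exact_mod_cast h : ∑ i, ‖U i j‖ ^ 2 = (1 : ℝ))

theorem IsHermitian.re_diag_eq_mulVec_eigenvalues {A : Matrix ι ι 𝕜} (hA : A.IsHermitian) :
    (fun i => RCLike.re (A i i)) =
      of (fun i j => ‖(hA.eigenvectorUnitary : Matrix ι ι 𝕜) i j‖ ^ 2) *ᵥ hA.eigenvalues := by
  ext i
  conv_lhs => rw [hA.spectral_theorem, Unitary.conjStarAlgAut_apply]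
  rw [mul_apply, map_sum]
  refine sum_congr rfl fun j _ => ?_
  rw [mul_diagonal, star_apply, RCLike.star_def, mul_right_comm, RCLike.mul_conj]
  simp [mul_comm]

end Matrix

/-- Schur–Horn majorization: the diagonal of a Hermitian matrix is majorized by its
eigenvalues: every `k`-subset sum of the diagonal is bounded by some `k`-subset sum of the
eigenvalues, and the total sums agree. -/
theorem stmt6 (n : ℕ) (R : Matrix (Fin n) (Fin n) ℂ) (hR : R.IsHermitian) :
    (∀ s : Finset (Fin n), ∃ t : Finset (Fin n), t.card = s.card ∧
        ∑ i ∈ s, (R i i).re ≤ ∑ i ∈ t, hR.eigenvalues i) ∧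
      ∑ i : Fin n, (R i i).re = ∑ i : Fin n, hR.eigenvalues i := by
  have hM := Matrix.normSq_mem_doublyStochastic hR.eigenvectorUnitary.2
  have hdiag : (fun i => (R i i).re) = _ := hR.re_diag_eq_mulVec_eigenvalues
  refine ⟨fun s => ?_, ?_⟩
  · simpa only [← hdiag] using
      Matrix.exists_card_eq_sum_mulVec_le_sum_of_mem_doublyStochastic hM hR.eigenvalues s
  · simpa only [← hdiag] using sum_mulVec_of_mem_doublyStochastic (x := hR.eigenvalues) hM
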